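/- arXiv:2309.14513 — 2 statements merged into one kernel-verified Lean document; each statement's English description precedes it below -/
import Mathlib

section
/- Let D=(V,A) be a digraph and S a multiset of V. There exists a packing of spanning s-arborescences in D, one rooted at each element s of S (counted with multiplicity), if and only if d_A^-(X) ≥ |S| − |S_X| for every nonempty subset X of V. (Edmonds' theorem) -/
/- Common definitions for formalizing packing-of-arborescences theorems.

Conventions:
* A digraph on a finite vertex type `V` is given by a finite multiset of arcs
  `A : Multiset (V × V)`, an arc `(u, v)` having tail `u` and head `v`.
* An undirected (multi)graph is given by a multiset of edges `E : Multiset (V × V)`,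
  an edge being recorded as an (arbitrarily ordered) pair of its endpoints.
* A multiset `S` of vertices (e.g. of roots) is given by a finite index type `S`
  together with a placement map `π : S → V`; the multiplicity of a vertex `v` is
  the size of the fiber over `v`.
* A dypergraph is given by a multiset `𝒜 : Multiset (Finset V × V)` of dyperedges
  `(Z, z)` with tail set `Z` and head `z`; a hypergraph by a multiset
  `ℰ : Multiset (Finset V)` of hyperedges. -/

attribute [local instance] Classical.propDecidable

noncomputable section

namespace ArborPaper

variable {V : Type*} [Fintype V] [DecidableEq V]

/-- An arc `a = (u, v)` (tail `u`, head `v`) enters `X` if its head is in `X`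
and its tail is outside. -/
def arcEnters (a : V × V) (X : Finset V) : Prop := a.2 ∈ X ∧ a.1 ∉ X

/-- An undirected edge (given by a pair of endpoints) enters `X` if exactly one of
its endpoints is in `X`. -/
def edgeEnters (e : V × V) (X : Finset V) : Prop :=
  (e.1 ∈ X ∧ e.2 ∉ X) ∨ (e.2 ∈ X ∧ e.1 ∉ X)

/-- The in-degree `d⁻_A(X)` of a vertex set `X`. -/
def inDeg (A : Multiset (V × V)) (X : Finset V) : ℕ :=
  (A.filter fun a => arcEnters a X).card

/-- The in-degree of a single vertex. -/
def inDegV (A : Multiset (V × V)) (v : V) : ℕ :=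
  (A.filter fun a => a.2 = v).card

/-- Reachability by a directed path using the arcs of `A`. -/
def Reaches (A : Multiset (V × V)) (u v : V) : Prop :=
  Relation.ReflTransGen (fun x y => (x, y) ∈ A) u v

/-- `P_D^X` : the set of vertices from which some vertex of `X` is reachable. -/
def PD (A : Multiset (V × V)) (X : Finset V) : Finset V :=
  Finset.univ.filter fun u => ∃ v ∈ X, Reaches A u v

/-- `Q_D^X` : the set of vertices reachable from some vertex of `X`. -/
def QD (A : Multiset (V × V)) (X : Finset V) : Finset V :=
  Finset.univ.filter fun v => ∃ u ∈ X, Reaches A u v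

/-- `C` is a strongly connected component of the digraph `(V, A)`. -/
def IsSCCD (A : Multiset (V × V)) (C : Finset V) : Prop :=
  ∃ v : V, C = Finset.univ.filter fun u => Reaches A u v ∧ Reaches A v u

/-- `B` is an `s`-arborescence with vertex set `U` : all arcs lie inside `U`,
every vertex of `U` other than `s` has in-degree exactly `1`, the root has
in-degree `0`, and every vertex of `U` is reachable from `s`
(equivalently: no circuit and all in-degrees of non-root vertices equal `1`). -/
def IsArborOn (B : Multiset (V × V)) (U : Finset V) (s : V) : Prop :=
  s ∈ U ∧ (∀ a ∈ B, a.1 ∈ U ∧ a.2 ∈ U) ∧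
  (∀ v ∈ U, v ≠ s → inDegV B v = 1) ∧ inDegV B s = 0 ∧
  ∀ v ∈ U, Reaches B s v

/-- `B` is a spanning `s`-arborescence (vertex set all of `V`). -/
def IsSpanningArbor (B : Multiset (V × V)) (s : V) : Prop :=
  IsArborOn B Finset.univ s

/-- One step along a mixed graph: an arc of `A`, or an edge of `E` in either direction. -/
def MStep (E A : Multiset (V × V)) (u v : V) : Prop :=
  (u, v) ∈ A ∨ (u, v) ∈ E ∨ (v, u) ∈ E

/-- Reachability by a mixed path in the mixed graph `(V, E ∪ A)`. -/
def MReaches (E A : Multiset (V × V)) (u v : V) : Prop :=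
  Relation.ReflTransGen (MStep E A) u v

/-- `P_F^X` for a mixed graph `F = (V, E ∪ A)`. -/
def PF (E A : Multiset (V × V)) (X : Finset V) : Finset V :=
  Finset.univ.filter fun u => ∃ v ∈ X, MReaches E A u v

/-- `Q_F^X` for a mixed graph `F = (V, E ∪ A)`. -/
def QF (E A : Multiset (V × V)) (X : Finset V) : Finset V :=
  Finset.univ.filter fun v => ∃ u ∈ X, MReaches E A u v

/-- `C` is a strongly connected component of the mixed graph `(V, E ∪ A)`. -/
def IsSCC (E A : Multiset (V × V)) (C : Finset V) : Prop :=
  ∃ v : V, C = Finset.univ.filter fun u => MReaches E A u v ∧ MReaches E A v u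

/-- `e_{E∪A}(𝒫)` : the number of edges of `E` and arcs of `A` entering at least one
member of the family `P`. -/
def eMixed (E A : Multiset (V × V)) (P : Finset (Finset V)) : ℕ :=
  (E.filter fun e => ∃ X ∈ P, edgeEnters e X).card +
  (A.filter fun a => ∃ X ∈ P, arcEnters a X).card

/-- A subpartition of `V` : a set of pairwise disjoint nonempty subsets. -/
def IsSubpartition (P : Finset (Finset V)) : Prop :=
  (∀ X ∈ P, X.Nonempty) ∧ ∀ X ∈ P, ∀ Y ∈ P, X ≠ Y → Disjoint X Y

/-- `Eo` is an orientation of the multiset `E` of undirected edges: each edge is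
kept or swapped. -/
def IsOrientationOf (E Eo : Multiset (V × V)) : Prop :=
  Multiset.Rel (fun e a => a = e ∨ a = Prod.swap e) E Eo

/-- The rank function of a matroid on a finite ground type `S`. -/
structure RankFn (S : Type*) [Fintype S] [DecidableEq S] where
  r : Finset S → ℕ
  rank_le_card : ∀ X : Finset S, r X ≤ X.card
  mono : ∀ ⦃X Y : Finset S⦄, X ⊆ Y → r X ≤ r Y
  submodular : ∀ X Y : Finset S, r (X ∪ Y) + r (X ∩ Y) ≤ r X + r Y

/-- `B` is a basis of `T` in the matroid with rank function `M` : an independent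
subset of `T` of full rank in `T`. -/
def RankFn.IsBasisOf {S : Type*} [Fintype S] [DecidableEq S] (M : RankFn S)
    (B T : Finset S) : Prop :=
  B ⊆ T ∧ M.r B = B.card ∧ M.r B = M.r T

/-- A dyperedge `a = (Z, z)` enters `X` if its head `z` is in `X` and some tail
vertex lies outside `X`. -/
def dypEnters (a : Finset V × V) (X : Finset V) : Prop :=
  a.2 ∈ X ∧ (a.1 \ X).Nonempty

/-- The in-degree `d⁻_𝒜(X)` in a dypergraph. -/
def dypInDeg (𝒜 : Multiset (Finset V × V)) (X : Finset V) : ℕ :=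
  (𝒜.filter fun a => dypEnters a X).card

/-- A hyperedge `e` enters `X` if it meets both `X` and its complement. -/
def hypEnters (e X : Finset V) : Prop := (e ∩ X).Nonempty ∧ (e \ X).Nonempty

/-- `e_{ℰ∪𝒜}(𝒫)` for a mixed hypergraph: the number of hyperedges of `ℰ` and
dyperedges of `𝒜` entering at least one member of `P`. -/
def eMH (ℰ : Multiset (Finset V)) (𝒜 : Multiset (Finset V × V))
    (P : Finset (Finset V)) : ℕ :=
  (ℰ.filter fun e => ∃ X ∈ P, hypEnters e X).card +
  (𝒜.filter fun a => ∃ X ∈ P, dypEnters a X).card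

/-- `B` is obtained from the multiset `𝒵` of dyperedges by trimming each
dyperedge `(Z, z)` to an arc `(y, z)` with `y ∈ Z`. -/
def Trims (𝒵 : Multiset (Finset V × V)) (B : Multiset (V × V)) : Prop :=
  Multiset.Rel (fun a b => b.2 = a.2 ∧ b.1 ∈ a.1) 𝒵 B

/-- `𝒟` is an orientation of the multiset `ℰ` of hyperedges: each hyperedge `X`
is replaced by a dyperedge `(X − x, x)` for some `x ∈ X`. -/
def Orients (ℰ : Multiset (Finset V)) (𝒟 : Multiset (Finset V × V)) : Prop :=
  Multiset.Rel (fun e a => a.2 ∈ e ∧ a.1 = e.erase a.2) ℰ 𝒟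

/-
Necessity: a root outside a nonempty `X` reaches `X` in its arborescence, so each such
arborescence has an arc entering `X`, and the arborescences are arc-disjoint.

Sufficiency (Lovász): grow the arborescence of one root `r` arc by arc, keeping the cut
condition for the other roots in the arcs not yet used. Call `X` tight if the unused arcs
entering `X` are at most the other roots outside `X`; by submodularity of the in-degree,
tight sets are closed under intersection. If `U` is the current vertex set and `X₀` a smallest
tight set meeting `V \ U`, then `X₀ \ U` has strictly more entering unused arcs than `X₀`
(the condition on `X₀ \ U` carries an extra `1` for `r`), so some arc from `X₀ ∩ U` enters
`X₀ \ U`; minimality of `X₀` shows it enters no tight set, so it can be added. Once the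
arborescence spans `V`, induct on the other roots.
-/

open Finset

section Edmonds

variable {V S : Type*}

lemma inDeg_eq_countP (C : Multiset (V × V)) (X : Finset V) :
    inDeg C X = C.countP (arcEnters · X) :=
  (Multiset.countP_eq_card_filter _ _).symm

lemma inDeg_add (C D : Multiset (V × V)) (X : Finset V) :
    inDeg (C + D) X = inDeg C X + inDeg D X := by
  simp only [inDeg_eq_countP, Multiset.countP_add]

lemma inDeg_mono {C D : Multiset (V × V)} (h : C ≤ D) (X : Finset V) :
    inDeg C X ≤ inDeg D X :=
  Multiset.card_le_card (Multiset.filter_le_filter _ h)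

lemma inDeg_sum {ι : Type*} (t : Finset ι) (f : ι → Multiset (V × V)) (X : Finset V) :
    inDeg (∑ i ∈ t, f i) X = ∑ i ∈ t, inDeg (f i) X := by
  induction t using Finset.cons_induction with
  | empty => simp [inDeg]
  | cons i t hi ih => rw [sum_cons, sum_cons, inDeg_add, ih]

lemma inDeg_erase [DecidableEq V] {C : Multiset (V × V)} {a : V × V} (ha : a ∈ C)
    (X : Finset V) : inDeg C X = inDeg (C.erase a) X + if arcEnters a X then 1 else 0 := by
  conv_lhs => rw [← Multiset.cons_erase ha]
  simp only [inDeg_eq_countP, Multiset.countP_cons]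

lemma inDeg_univ [Fintype V] (C : Multiset (V × V)) : inDeg C univ = 0 := by
  simp [inDeg, arcEnters]

lemma inDeg_eq_zero_of_forall_head_not_mem {C : Multiset (V × V)} {X : Finset V}
    (h : ∀ a ∈ C, a.2 ∉ X) : inDeg C X = 0 := by
  simp only [inDeg_eq_countP, Multiset.countP_eq_zero]
  exact fun a ha hX => h a ha hX.1

lemma inDeg_union_add_inDeg_inter_le [DecidableEq V] (C : Multiset (V × V)) (X Y : Finset V) :
    inDeg C (X ∪ Y) + inDeg C (X ∩ Y) ≤ inDeg C X + inDeg C Y := by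
  induction C using Multiset.induction_on with
  | empty => simp [inDeg]
  | cons a C ih =>
    simp only [inDeg_eq_countP, Multiset.countP_cons] at *
    have : (if arcEnters a (X ∪ Y) then 1 else 0) + (if arcEnters a (X ∩ Y) then 1 else 0)
        ≤ (if arcEnters a X then 1 else 0) + (if arcEnters a Y then 1 else 0) := by
      by_cases h₁ : a.1 ∈ X <;> by_cases h₂ : a.2 ∈ X <;> by_cases h₃ : a.1 ∈ Y <;>
        by_cases h₄ : a.2 ∈ Y <;> simp [arcEnters, h₁, h₂, h₃, h₄]
    omega

lemma exists_arcEnters_of_inDeg_lt {C : Multiset (V × V)} {X Z : Finset V}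
    (h : inDeg C X < inDeg C Z) : ∃ a ∈ C, arcEnters a Z ∧ ¬ arcEnters a X := by
  by_contra! hC
  refine h.not_ge (Multiset.card_le_card ?_)
  calc C.filter (arcEnters · Z) = C.filter fun a => arcEnters a Z ∧ arcEnters a X :=
        Multiset.filter_congr fun a ha => ⟨fun hZ => ⟨hZ, hC a ha hZ⟩, And.left⟩
    _ ≤ C.filter (arcEnters · X) := Multiset.monotone_filter_right C fun _ => And.right

lemma pos_inDeg_of_reaches {C : Multiset (V × V)} {u v : V} {X : Finset V}
    (h : Reaches C u v) (hu : u ∉ X) (hv : v ∈ X) : 0 < inDeg C X := by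
  induction h with
  | refl => exact absurd hv hu
  | @tail w v _ hwv ih =>
    by_cases hw : w ∈ X
    · exact ih hw
    · rw [inDeg_eq_countP]
      exact Multiset.countP_pos.2 ⟨(w, v), hwv, hv, hw⟩

lemma Reaches.mono {C D : Multiset (V × V)} (h : C ≤ D) {u v : V} (huv : Reaches C u v) :
    Reaches D u v :=
  Relation.ReflTransGen.mono (fun _ _ hxy => Multiset.mem_of_le h hxy) u v huv

lemma inDegV_cons [DecidableEq V] (a : V × V) (C : Multiset (V × V)) (v : V) :
    inDegV (a ::ₘ C) v = inDegV C v + if a.2 = v then 1 else 0 := by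
  simp only [inDegV, ← Multiset.countP_eq_card_filter, Multiset.countP_cons]

lemma IsSpanningArbor.reaches [Fintype V] [DecidableEq V] {B : Multiset (V × V)} {s : V}
    (hB : IsSpanningArbor B s) (v : V) : Reaches B s v :=
  hB.2.2.2.2 v (mem_univ v)

lemma isArborOn_zero_singleton [DecidableEq V] (s : V) : IsArborOn 0 {s} s := by
  refine ⟨mem_singleton_self s, by simp, fun v hv hvs => absurd (mem_singleton.1 hv) hvs,
    by simp [inDegV], fun v hv => ?_⟩
  rw [mem_singleton.1 hv]
  exact Relation.ReflTransGen.refl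

lemma IsArborOn.cons [DecidableEq V] {B : Multiset (V × V)} {U : Finset V} {s : V}
    (hB : IsArborOn B U s) {a : V × V} (ha₁ : a.1 ∈ U) (ha₂ : a.2 ∉ U) :
    IsArborOn (a ::ₘ B) (insert a.2 U) s := by
  obtain ⟨hs, hBU, hdeg, hdegs, hreach⟩ := hB
  have hB_le : B ≤ a ::ₘ B := Multiset.le_cons_self B a
  refine ⟨mem_insert_of_mem hs, ?_, fun v hv hvs => ?_, ?_, fun v hv => ?_⟩
  · intro b hb
    rcases Multiset.mem_cons.1 hb with rfl | hb
    · exact ⟨mem_insert_of_mem ha₁, mem_insert_self _ _⟩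
    · exact ⟨mem_insert_of_mem (hBU b hb).1, mem_insert_of_mem (hBU b hb).2⟩
  · rw [inDegV_cons]
    rcases mem_insert.1 hv with rfl | hvU
    · have : inDegV B a.2 = 0 :=
        Multiset.card_eq_zero.2 <| Multiset.filter_eq_nil.2 fun b hb hba =>
          ha₂ (hba ▸ (hBU b hb).2)
      simp [this]
    · rw [hdeg v hvU hvs, if_neg (ne_of_mem_of_not_mem hvU ha₂).symm]
  · rw [inDegV_cons, hdegs, if_neg (ne_of_mem_of_not_mem hs ha₂).symm]
  · rcases mem_insert.1 hv with rfl | hvU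
    · exact ((hreach a.1 ha₁).mono hB_le).tail (Multiset.mem_cons_self a B)
    · exact (hreach v hvU).mono hB_le

variable [DecidableEq V] (π : S → V)

def rootsOutside (T : Finset S) (X : Finset V) : Finset S := {s ∈ T | π s ∉ X}

def CutCondition (A : Multiset (V × V)) (T : Finset S) : Prop :=
  ∀ X : Finset V, X.Nonempty → #(rootsOutside π T X) ≤ inDeg A X

lemma card_rootsOutside_union_add_inter (T : Finset S) (X Y : Finset V) :
    #(rootsOutside π T (X ∪ Y)) + #(rootsOutside π T (X ∩ Y)) =
      #(rootsOutside π T X) + #(rootsOutside π T Y) := by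
  classical
  have hunion : rootsOutside π T (X ∪ Y) = rootsOutside π T X ∩ rootsOutside π T Y := by
    ext s; simp only [rootsOutside, mem_filter, mem_union, mem_inter]; tauto
  have hinter : rootsOutside π T (X ∩ Y) = rootsOutside π T X ∪ rootsOutside π T Y := by
    ext s; simp only [rootsOutside, mem_filter, mem_union, mem_inter]; tauto
  rw [hunion, hinter, card_inter_add_card_union]

lemma rootsOutside_anti {T : Finset S} {X Y : Finset V} (h : X ⊆ Y) :
    rootsOutside π T Y ⊆ rootsOutside π T X :=
  monotone_filter_right T fun _ _ hY hX => hY (h hX)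

lemma rootsOutside_mono {T T' : Finset S} (h : T ⊆ T') (X : Finset V) :
    rootsOutside π T X ⊆ rootsOutside π T' X :=
  filter_subset_filter _ h

lemma card_rootsOutside_insert [DecidableEq S] {T : Finset S} {r : S} (hr : r ∉ T)
    {X : Finset V} (hX : π r ∉ X) :
    #(rootsOutside π (insert r T) X) = #(rootsOutside π T X) + 1 := by
  rw [rootsOutside, filter_insert, if_pos hX,
    card_insert_of_notMem fun h => hr (mem_filter.1 h).1]
  rfl

variable {π}

lemma CutCondition.inDeg_inter_le {C : Multiset (V × V)} {T : Finset S}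
    (hC : CutCondition π C T) {X Y : Finset V} (hX : X.Nonempty)
    (hXt : inDeg C X ≤ #(rootsOutside π T X)) (hYt : inDeg C Y ≤ #(rootsOutside π T Y)) :
    inDeg C (X ∩ Y) ≤ #(rootsOutside π T (X ∩ Y)) := by
  have := inDeg_union_add_inDeg_inter_le C X Y
  have := card_rootsOutside_union_add_inter π T X Y
  have := hC (X ∪ Y) (hX.mono subset_union_left)
  omega

theorem CutCondition.exists_arc_erase [Fintype V] {C : Multiset (V × V)} {T : Finset S}
    (hC : CutCondition π C T) {U : Finset V} (hU : U ≠ univ)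
    (hsurplus : ∀ Z : Finset V, Z.Nonempty → Disjoint U Z →
      #(rootsOutside π T Z) < inDeg C Z) :
    ∃ a ∈ C, a.1 ∈ U ∧ a.2 ∉ U ∧ CutCondition π (C.erase a) T := by
  let tight : Finset (Finset V) :=
    {X | (X \ U).Nonempty ∧ inDeg C X ≤ #(rootsOutside π T X)}
  have mem_tight {X : Finset V} :
      X ∈ tight ↔ (X \ U).Nonempty ∧ inDeg C X ≤ #(rootsOutside π T X) := by
    simp only [tight, mem_filter, mem_univ, true_and]
  have huniv : univ ∈ tight :=
    mem_tight.2 ⟨sdiff_nonempty.2 fun h => hU (univ_subset_iff.1 h), by simp [inDeg_univ]⟩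
  obtain ⟨X₀, hX₀, hmin⟩ := tight.exists_min_image card ⟨univ, huniv⟩
  obtain ⟨hX₀U, hX₀t⟩ := mem_tight.1 hX₀
  have hlt : inDeg C X₀ < inDeg C (X₀ \ U) :=
    calc inDeg C X₀ ≤ #(rootsOutside π T X₀) := hX₀t
      _ ≤ #(rootsOutside π T (X₀ \ U)) := card_le_card (rootsOutside_anti π sdiff_subset)
      _ < inDeg C (X₀ \ U) := hsurplus _ hX₀U disjoint_sdiff
  obtain ⟨a, haC, ⟨ha₂, ha₁⟩, haX₀⟩ := exists_arcEnters_of_inDeg_lt hlt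
  have ha₂X₀ : a.2 ∈ X₀ := (mem_sdiff.1 ha₂).1
  have ha₁X₀ : a.1 ∈ X₀ := by by_contra h; exact haX₀ ⟨ha₂X₀, h⟩
  have ha₁U : a.1 ∈ U := by by_contra h; exact ha₁ (mem_sdiff.2 ⟨ha₁X₀, h⟩)
  refine ⟨a, haC, ha₁U, (mem_sdiff.1 ha₂).2, fun Y hY => ?_⟩
  have hCY := inDeg_erase haC Y
  by_cases haY : arcEnters a Y
  · have hYt : ¬ inDeg C Y ≤ #(rootsOutside π T Y) := by
      intro hYt
      have hX₀Y : X₀ ∩ Y ∈ tight := mem_tight.2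
        ⟨⟨a.2, mem_sdiff.2 ⟨mem_inter.2 ⟨ha₂X₀, haY.1⟩, (mem_sdiff.1 ha₂).2⟩⟩,
          hC.inDeg_inter_le (hX₀U.mono sdiff_subset) hX₀t hYt⟩
      have : X₀ ∩ Y = X₀ := eq_of_subset_of_card_le inter_subset_left (hmin _ hX₀Y)
      exact haY.2 (inter_eq_left.1 this ha₁X₀)
    rw [if_pos haY] at hCY
    omega
  · rw [if_neg haY] at hCY
    have := hC Y hY
    omega

theorem exists_isSpanningArbor_of_isArborOn [Fintype V]
    {A B C : Multiset (V × V)} {T : Finset S} {U : Finset V} {s : V}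
    (hBC : B + C = A) (hB : IsArborOn B U s) (hC : CutCondition π C T)
    (hAsurplus : ∀ Z : Finset V, Z.Nonempty → Disjoint U Z →
      #(rootsOutside π T Z) < inDeg A Z) :
    ∃ B' C', B' + C' = A ∧ IsSpanningArbor B' s ∧ CutCondition π C' T := by
  by_cases hU : U = univ
  · subst hU
    exact ⟨B, C, hBC, hB, hC⟩
  have hsurplus : ∀ Z : Finset V, Z.Nonempty → Disjoint U Z →
      #(rootsOutside π T Z) < inDeg C Z := by
    intro Z hZ hUZ
    have hBZ : inDeg B Z = 0 :=
      inDeg_eq_zero_of_forall_head_not_mem fun b hb => disjoint_left.1 hUZ (hB.2.1 b hb).2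
    have := hAsurplus Z hZ hUZ
    rw [← hBC, inDeg_add] at this
    omega
  obtain ⟨a, haC, ha₁, ha₂, hCa⟩ := hC.exists_arc_erase hU hsurplus
  have hBC' : a ::ₘ B + C.erase a = A := by
    rw [Multiset.cons_add, ← Multiset.add_cons, Multiset.cons_erase haC, hBC]
  exact exists_isSpanningArbor_of_isArborOn hBC' (hB.cons ha₁ ha₂) hCa
    fun Z hZ hUZ => hAsurplus Z hZ (disjoint_of_subset_left (subset_insert _ _) hUZ)
termination_by #Uᶜ
decreasing_by
  rw [compl_insert]
  exact card_erase_lt_of_mem (mem_compl.2 ha₂)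

theorem exists_packing_of_cutCondition [Fintype V] (A : Multiset (V × V))
    (T : Finset S) (hA : CutCondition π A T) :
    ∃ B : S → Multiset (V × V),
      ∑ s ∈ T, B s ≤ A ∧ ∀ s ∈ T, IsSpanningArbor (B s) (π s) := by
  classical
  induction T using Finset.induction_on generalizing A with
  | empty => exact ⟨0, by simp, by simp⟩
  | insert r T hr ih =>
    have hcut : CutCondition π A T := fun X hX =>
      (card_le_card (rootsOutside_mono π (subset_insert r T) X)).trans (hA X hX)
    have hsurplus : ∀ Z : Finset V, Z.Nonempty → Disjoint {π r} Z →
        #(rootsOutside π T Z) < inDeg A Z := fun Z hZ hrZ => by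
      have := hA Z hZ
      rw [card_rootsOutside_insert π hr (disjoint_singleton_left.1 hrZ)] at this
      omega
    obtain ⟨B₀, C, hB₀C, hB₀, hC⟩ := exists_isSpanningArbor_of_isArborOn (zero_add A)
      (isArborOn_zero_singleton (π r)) hcut hsurplus
    obtain ⟨B, hBC, hB⟩ := ih C hC
    have hBT : ∀ s ∈ T, Function.update B r B₀ s = B s := fun s hs =>
      Function.update_of_ne (ne_of_mem_of_not_mem hs hr) _ _
    refine ⟨Function.update B r B₀, ?_, ?_⟩
    · rw [sum_insert hr, Function.update_self, sum_congr rfl hBT, ← hB₀C]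
      exact add_le_add le_rfl hBC
    · intro s hs
      rcases mem_insert.1 hs with rfl | hs
      · rwa [Function.update_self]
      · rw [hBT s hs]
        exact hB s hs

theorem CutCondition.of_packing [Fintype V] {A : Multiset (V × V)}
    {T : Finset S} {B : S → Multiset (V × V)} (hBA : ∑ s ∈ T, B s ≤ A)
    (hB : ∀ s ∈ T, IsSpanningArbor (B s) (π s)) : CutCondition π A T := by
  rintro X ⟨v, hv⟩
  calc #(rootsOutside π T X) = ∑ s ∈ rootsOutside π T X, 1 := card_eq_sum_ones _
    _ ≤ ∑ s ∈ rootsOutside π T X, inDeg (B s) X := sum_le_sum fun s hs =>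
        have hs := mem_filter.1 hs
        pos_inDeg_of_reaches ((hB s hs.1).reaches v) hs.2 hv
    _ ≤ ∑ s ∈ T, inDeg (B s) X := sum_le_sum_of_subset (filter_subset _ _)
    _ = inDeg (∑ s ∈ T, B s) X := (inDeg_sum T B X).symm
    _ ≤ inDeg A X := inDeg_mono hBA X

theorem exists_packing_iff_cutCondition [Fintype V] (A : Multiset (V × V))
    (T : Finset S) :
    (∃ B : S → Multiset (V × V),
        ∑ s ∈ T, B s ≤ A ∧ ∀ s ∈ T, IsSpanningArbor (B s) (π s)) ↔
      CutCondition π A T :=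
  ⟨fun ⟨_, hBA, hB⟩ => CutCondition.of_packing hBA hB, exists_packing_of_cutCondition A T⟩

lemma card_rootsOutside_univ [Fintype S] (X : Finset V) :
    (#(rootsOutside π univ X) : ℤ) = Fintype.card S - #{s | π s ∈ X} := by
  rw [eq_sub_iff_add_eq, ← Nat.cast_add, rootsOutside, add_comm,
    card_filter_add_card_filter_not, card_univ]

end Edmonds

theorem edmonds_packing_spanning_arborescences_general
    (V : Type) [Fintype V] [DecidableEq V]
    (A : Multiset (V × V))
    (S : Type) [Fintype S] (π : S → V) :
    (∃ B : S → Multiset (V × V),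
        (∑ s : S, B s) ≤ A ∧ ∀ s : S, IsSpanningArbor (B s) (π s)) ↔
    ∀ X : Finset V, X.Nonempty →
      (Fintype.card S : ℤ) - (Finset.univ.filter fun s => π s ∈ X).card
        ≤ (inDeg A X : ℤ) := by
  simp only [← card_rootsOutside_univ, Nat.cast_le]
  simpa only [mem_univ, true_implies, CutCondition] using
    exists_packing_iff_cutCondition (π := π) A univ

/-- **Edmonds' theorem.** Let `D = (V, A)` be a digraph and `S` a multiset of `V`
(given by an index type `S` with placement `π`). There is a packing of spanning
`s`-arborescences, one rooted at each element `s` of `S`, iff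
`d⁻_A(X) ≥ |S| − |S_X|` for every nonempty `X ⊆ V`. -/
theorem edmonds_packing_spanning_arborescences
    (V : Type) [Fintype V] [DecidableEq V]
    (A : Multiset (V × V)) (hA : ∀ a ∈ A, a.1 ≠ a.2)
    (S : Type) [Fintype S] [DecidableEq S] (π : S → V) :
    (∃ B : S → Multiset (V × V),
        (∑ s : S, B s) ≤ A ∧ ∀ s : S, IsSpanningArbor (B s) (π s)) ↔
    ∀ X : Finset V, X.Nonempty →
      (Fintype.card S : ℤ) - (Finset.univ.filter fun s => π s ∈ X).card
        ≤ (inDeg A X : ℤ) :=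
  edmonds_packing_spanning_arborescences_general V A S π

end ArborPaper
end
end

section
/- Let D=(V,A) be a digraph, S a multiset of V and M=(S,r_M) a matroid on S. Then the following two conditions are equivalent: (i) d_A^-(X) ≥ r_M(S_{P_D^X}) − r_M(S_X) for every subset X of V; (ii) for every strongly connected component C of D and every subset X of P_D^C with X∩C ≠ ∅ and d_A^-(X−C)=0, d_A^-(X) ≥ r_M(S_{P_D^C}) − r_M(S_X). -/
/- Common definitions for formalizing packing-of-arborescences theorems.

Conventions:
* A digraph on a finite vertex type `V` is given by a finite multiset of arcs
  `A : Multiset (V × V)`, an arc `(u, v)` having tail `u` and head `v`.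
* An undirected (multi)graph is given by a multiset of edges `E : Multiset (V × V)`,
  an edge being recorded as an (arbitrarily ordered) pair of its endpoints.
* A multiset `S` of vertices (e.g. of roots) is given by a finite index type `S`
  together with a placement map `π : S → V`; the multiplicity of a vertex `v` is
  the size of the fiber over `v`.
* A dypergraph is given by a multiset `𝒜 : Multiset (Finset V × V)` of dyperedges
  `(Z, z)` with tail set `Z` and head `z`; a hypergraph by a multiset
  `ℰ : Multiset (Finset V)` of hyperedges. -/

attribute [local instance] Classical.propDecidable

noncomputable section

namespace ArborPaper

variable {V : Type*} [Fintype V] [DecidableEq V]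

/- Király's condition implies the Gao–Yang one because `P_D^C ⊆ P_D^X` whenever `X` meets
the strong component `C`. Conversely, induct on `|X|`: choose a strong component `C` meeting `X`
from which no vertex of `Y = X − C` is reachable, and let `T` be the set of common ancestors of
`Y` and `C` outside `C`. No arc enters `T`, so the Gao–Yang condition applies to
`X' = (X ∩ C) ∪ T`, and induction applies to `Y`. The arcs entering `X'` and `Y` enter `X` at
heads in `C` and outside `C` respectively, and two uses of submodularity give
`r(S_{P^X}) + r(S_{X'}) + r(S_Y) ≤ r(S_{P^C}) + r(S_{P^Y}) + r(S_X)`. -/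

open Finset

theorem _root_.Multiset.card_filter_add_card_filter_le {α : Type*} (s : Multiset α)
    {p q r : α → Prop} [DecidablePred p] [DecidablePred q] [DecidablePred r]
    (hp : ∀ a ∈ s, p a → r a) (hq : ∀ a ∈ s, q a → r a) (hpq : ∀ a ∈ s, p a → ¬q a) :
    (s.filter p).card + (s.filter q).card ≤ (s.filter r).card := by
  have hpq0 : s.filter (fun a => p a ∧ q a) = 0 :=
    Multiset.filter_eq_nil.2 fun a ha h => hpq a ha h.1 h.2
  have hor : s.filter (fun a => p a ∨ q a) = (s.filter r).filter (fun a => p a ∨ q a) := by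
    rw [Multiset.filter_filter]
    exact Multiset.filter_congr fun a ha =>
      ⟨fun h => ⟨h, h.elim (hp a ha) (hq a ha)⟩, And.left⟩
  calc (s.filter p).card + (s.filter q).card = (s.filter fun a => p a ∨ q a).card := by
        rw [← Multiset.card_add, Multiset.filter_add_filter, hpq0, add_zero]
    _ ≤ (s.filter r).card := by
        rw [hor]
        exact Multiset.card_le_card (Multiset.filter_le _ _)

section Submodular

variable {α : Type*} [DecidableEq α] {f : Finset α → ℕ}

theorem add_le_add_of_subset_union_of_subset_inter (hmono : Monotone f)
    (hsub : ∀ X Y, f (X ∪ Y) + f (X ∩ Y) ≤ f X + f Y) {W Z X Y : Finset α}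
    (hW : W ⊆ X ∪ Y) (hZ : Z ⊆ X ∩ Y) : f W + f Z ≤ f X + f Y :=
  (add_le_add (hmono hW) (hmono hZ)).trans (hsub X Y)

end Submodular

namespace RankFn

variable {S β : Type*} [Fintype S] [DecidableEq S] [DecidableEq β] (M : RankFn S) (π : S → β)

/-- The rank `r_M(S_X)` of the elements of `S` placed in `X`. -/
def rankOver (X : Finset β) : ℕ :=
  M.r (univ.filter fun s => π s ∈ X)

theorem rankOver_mono : Monotone (M.rankOver π) := fun _ _ h =>
  M.mono fun _ hs => by simpa using h (by simpa using hs)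

theorem rankOver_submodular (X Y : Finset β) :
    M.rankOver π (X ∪ Y) + M.rankOver π (X ∩ Y) ≤ M.rankOver π X + M.rankOver π Y := by
  unfold rankOver
  convert M.submodular (univ.filter fun s => π s ∈ X) (univ.filter fun s => π s ∈ Y) using 3 <;>
    ext <;> simp

end RankFn

section Reachability

variable {α : Type*} [Fintype α] {A : Multiset (α × α)} {X C : Finset α} {u v : α}

@[simp]
theorem mem_PD : u ∈ PD A X ↔ ∃ v ∈ X, Reaches A u v := by
  simp [PD]

@[simp]
theorem mem_QD : v ∈ QD A X ↔ ∃ u ∈ X, Reaches A u v := by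
  simp [QD]

theorem subset_PD : X ⊆ PD A X := fun u hu => mem_PD.2 ⟨u, hu, .refl⟩

@[simp]
theorem PD_empty : PD A ∅ = ∅ := by
  ext; simp

theorem mem_PD_of_reaches (huv : Reaches A u v) (hv : v ∈ PD A X) : u ∈ PD A X :=
  let ⟨w, hw, hvw⟩ := mem_PD.1 hv
  mem_PD.2 ⟨w, hw, huv.trans hvw⟩

theorem exists_mem_forall_reaches_imp_reaches (hX : X.Nonempty) :
    ∃ x ∈ X, ∀ y ∈ X, Reaches A x y → Reaches A y x := by
  obtain ⟨x, hx, hmin⟩ := exists_min_image X (fun v => (QD A {v}).card) hX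
  refine ⟨x, hx, fun y hy hxy => ?_⟩
  have hQ : QD A {y} ⊆ QD A {x} := fun z hz => by
    obtain ⟨_, hy', hyz⟩ := mem_QD.1 hz
    rw [mem_singleton] at hy'
    subst hy'
    exact mem_QD.2 ⟨x, mem_singleton_self x, hxy.trans hyz⟩
  have hx_mem : x ∈ QD A {y} := by
    rw [eq_of_subset_of_card_le hQ (hmin y hy)]
    exact mem_QD.2 ⟨x, mem_singleton_self x, .refl⟩
  simpa using hx_mem

theorem IsSCCD.reaches (hC : IsSCCD A C) (hu : u ∈ C) (hv : v ∈ C) : Reaches A u v := by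
  obtain ⟨w, rfl⟩ := hC
  simp only [mem_filter, mem_univ, true_and] at hu hv
  exact hu.1.trans hv.2

theorem IsSCCD.mem_of_reaches (hC : IsSCCD A C) (hu : u ∈ C) (huv : Reaches A u v)
    (hv : v ∈ PD A C) : v ∈ C := by
  obtain ⟨w, rfl⟩ := hC
  obtain ⟨c, hc, hvc⟩ := mem_PD.1 hv
  simp only [mem_filter, mem_univ, true_and] at hu hc ⊢
  exact ⟨hvc.trans hc.1, hu.2.trans huv⟩

theorem IsSCCD.PD_subset [DecidableEq α] (hC : IsSCCD A C) (hXC : (X ∩ C).Nonempty) :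
    PD A C ⊆ PD A X := by
  obtain ⟨x, hx⟩ := hXC
  rw [mem_inter] at hx
  intro u hu
  obtain ⟨c, hc, huc⟩ := mem_PD.1 hu
  exact mem_PD.2 ⟨x, hx.1, huc.trans (hC.reaches hc hx.2)⟩

theorem exists_isSCCD_inter_nonempty_sink [DecidableEq α] (hX : X.Nonempty) :
    ∃ C, IsSCCD A C ∧ (X ∩ C).Nonempty ∧ ∀ u ∈ C, ∀ v ∈ X, Reaches A u v → v ∈ C := by
  obtain ⟨x, hx, hsink⟩ := exists_mem_forall_reaches_imp_reaches (A := A) hX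
  refine ⟨_, ⟨x, rfl⟩, ⟨x, by simpa using ⟨hx, .refl⟩⟩, fun u hu v hv huv => ?_⟩
  simp only [mem_filter, mem_univ, true_and] at hu ⊢
  have hxv := hu.2.trans huv
  exact ⟨hsink v hv hxv, hxv⟩

theorem IsSCCD.not_arcEnters_PD_inter_PD_sdiff [DecidableEq α] (hC : IsSCCD A C)
    (Z : Finset α) : ∀ a ∈ A, ¬arcEnters a ((PD A Z ∩ PD A C) \ C) := by
  rintro ⟨u, v⟩ ha ⟨hv, hu⟩
  simp only [mem_sdiff, mem_inter] at hv hu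
  have huv : Reaches A u v := .single ha
  have huC : u ∈ C := by
    by_contra huC
    exact hu ⟨⟨mem_PD_of_reaches huv hv.1.1, mem_PD_of_reaches huv hv.1.2⟩, huC⟩
  exact hv.2 (hC.mem_of_reaches huC huv hv.1.2)

end Reachability

theorem arcEnters_of_arcEnters_sdiff {α : Type*} [DecidableEq α] {A : Multiset (α × α)}
    {C X : Finset α} (hsink : ∀ u ∈ C, ∀ v ∈ X, Reaches A u v → v ∈ C) {a : α × α} (ha : a ∈ A)
    (h : arcEnters a (X \ C)) : arcEnters a X ∧ a.2 ∉ C := by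
  obtain ⟨hv, hu⟩ := h
  rw [mem_sdiff] at hv hu
  have huC : a.1 ∉ C := fun huC => hv.2 (hsink _ huC _ hv.1 (.single ha))
  exact ⟨⟨hv.1, fun huX => hu ⟨huX, huC⟩⟩, hv.2⟩

section InductionStep

variable {A : Multiset (V × V)} {C X : Finset V}

def gaoYangSet (A : Multiset (V × V)) (C X : Finset V) : Finset V :=
  X ∩ C ∪ (PD A (X \ C) ∩ PD A C) \ C

theorem gaoYangSet_inter_nonempty (hXC : (X ∩ C).Nonempty) : (gaoYangSet A C X ∩ C).Nonempty :=
  hXC.mono (subset_inter subset_union_left inter_subset_right)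

theorem gaoYangSet_subset_PD : gaoYangSet A C X ⊆ PD A C :=
  union_subset (inter_subset_right.trans subset_PD) (sdiff_subset.trans inter_subset_right)

theorem IsSCCD.inDeg_gaoYangSet_sdiff_eq_zero (hC : IsSCCD A C) :
    inDeg A (gaoYangSet A C X \ C) = 0 := by
  have hT : gaoYangSet A C X \ C = (PD A (X \ C) ∩ PD A C) \ C := by
    ext; simp only [gaoYangSet, mem_sdiff, mem_union, mem_inter]; tauto
  rw [hT, inDeg, Multiset.card_eq_zero, Multiset.filter_eq_nil]
  exact hC.not_arcEnters_PD_inter_PD_sdiff _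

theorem IsSCCD.arcEnters_of_arcEnters_gaoYangSet (hC : IsSCCD A C) {a : V × V} (ha : a ∈ A)
    (h : arcEnters a (gaoYangSet A C X)) : arcEnters a X ∧ a.2 ∈ C := by
  obtain ⟨hv, hu⟩ := h
  rw [gaoYangSet, mem_union] at hv hu
  rcases hv with hv | hv
  · rw [mem_inter] at hv
    refine ⟨⟨hv.1, fun huX => hu ?_⟩, hv.2⟩
    by_cases huC : a.1 ∈ C
    · exact .inl (mem_inter.2 ⟨huX, huC⟩)
    · refine .inr (mem_sdiff.2 ⟨mem_inter.2 ⟨subset_PD (mem_sdiff.2 ⟨huX, huC⟩), ?_⟩, huC⟩)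
      exact mem_PD_of_reaches (.single ha) (subset_PD hv.2)
  · exact absurd ⟨hv, fun huT => hu (.inr huT)⟩ (hC.not_arcEnters_PD_inter_PD_sdiff _ a ha)

theorem IsSCCD.inDeg_gaoYangSet_add_inDeg_sdiff_le (hC : IsSCCD A C)
    (hsink : ∀ u ∈ C, ∀ v ∈ X, Reaches A u v → v ∈ C) :
    inDeg A (gaoYangSet A C X) + inDeg A (X \ C) ≤ inDeg A X :=
  Multiset.card_filter_add_card_filter_le A
    (fun _ ha h => (hC.arcEnters_of_arcEnters_gaoYangSet ha h).1)
    (fun _ ha h => (arcEnters_of_arcEnters_sdiff hsink ha h).1)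
    (fun _ ha h₁ h₂ => (arcEnters_of_arcEnters_sdiff hsink ha h₂).2
      (hC.arcEnters_of_arcEnters_gaoYangSet ha h₁).2)

theorem rankOver_PD_add_le {S : Type*} [Fintype S] [DecidableEq S] (M : RankFn S) (π : S → V)
    (A : Multiset (V × V)) (C X : Finset V) :
    M.rankOver π (PD A X) + M.rankOver π (gaoYangSet A C X) + M.rankOver π (X \ C) ≤
      M.rankOver π (PD A C) + M.rankOver π (PD A (X \ C)) + M.rankOver π X := by
  have hPD : PD A X ⊆ PD A C ∪ (PD A (X \ C) ∪ X ∩ C) := fun u hu => by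
    obtain ⟨v, hv, huv⟩ := mem_PD.1 hu
    by_cases hvC : v ∈ C
    · exact mem_union_left _ (mem_PD.2 ⟨v, hvC, huv⟩)
    · exact mem_union_right _ (mem_union_left _ (mem_PD.2 ⟨v, mem_sdiff.2 ⟨hv, hvC⟩, huv⟩))
  have hX' : gaoYangSet A C X ⊆ PD A C ∩ (PD A (X \ C) ∪ X ∩ C) :=
    subset_inter gaoYangSet_subset_PD <| union_subset subset_union_right <|
      sdiff_subset.trans (inter_subset_left.trans subset_union_left)
  have h₁ := add_le_add_of_subset_union_of_subset_inter (M.rankOver_mono π)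
    (M.rankOver_submodular π) hPD hX'
  have h₂ := add_le_add_of_subset_union_of_subset_inter (M.rankOver_mono π)
    (M.rankOver_submodular π) (W := PD A (X \ C) ∪ X ∩ C) (Y := X)
    (union_subset_union_right inter_subset_left) (subset_inter subset_PD sdiff_subset)
  omega

end InductionStep

section Conditions

variable {S : Type*} [Fintype S] [DecidableEq S] (M : RankFn S) (π : S → V) (A : Multiset (V × V))

theorem gao_yang_condition_of_kiraly_condition
    (hK : ∀ X, (M.rankOver π (PD A X) : ℤ) - M.rankOver π X ≤ inDeg A X)
    {C : Finset V} (hC : IsSCCD A C) {X : Finset V} (hXC : (X ∩ C).Nonempty) :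
    (M.rankOver π (PD A C) : ℤ) - M.rankOver π X ≤ inDeg A X := by
  have := M.rankOver_mono π (hC.PD_subset hXC)
  have := hK X
  omega

theorem kiraly_condition_of_gao_yang_condition
    (hGY : ∀ C, IsSCCD A C → ∀ X, X ⊆ PD A C → (X ∩ C).Nonempty → inDeg A (X \ C) = 0 →
      (M.rankOver π (PD A C) : ℤ) - M.rankOver π X ≤ inDeg A X)
    (X : Finset V) : (M.rankOver π (PD A X) : ℤ) - M.rankOver π X ≤ inDeg A X := by
  induction X using Finset.strongInduction with
  | H X ih =>
    obtain rfl | hX := X.eq_empty_or_nonempty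
    · simp
    obtain ⟨C, hC, hXC, hsink⟩ := exists_isSCCD_inter_nonempty_sink (A := A) hX
    have hY := ih (X \ C) <|
      sdiff_lt_left.2 (not_disjoint_iff_nonempty_inter.2 (by rwa [inter_comm]))
    have hX' := hGY C hC _ gaoYangSet_subset_PD (gaoYangSet_inter_nonempty hXC)
      hC.inDeg_gaoYangSet_sdiff_eq_zero
    have hrank := rankOver_PD_add_le M π A C X
    have hdeg := hC.inDeg_gaoYangSet_add_inDeg_sdiff_le hsink
    omega

end Conditions

theorem kiraly_condition_iff_gao_yang_condition_general
    (V : Type) [Fintype V] [DecidableEq V]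
    (A : Multiset (V × V))
    (S : Type) [Fintype S] [DecidableEq S] (π : S → V) (M : RankFn S) :
    (∀ X : Finset V,
        (M.r (Finset.univ.filter fun s => π s ∈ PD A X) : ℤ) -
            M.r (Finset.univ.filter fun s => π s ∈ X)
          ≤ (inDeg A X : ℤ)) ↔
    (∀ C : Finset V, IsSCCD A C →
      ∀ X : Finset V, X ⊆ PD A C → (X ∩ C).Nonempty → inDeg A (X \ C) = 0 →
        (M.r (Finset.univ.filter fun s => π s ∈ PD A C) : ℤ) -
            M.r (Finset.univ.filter fun s => π s ∈ X)
          ≤ (inDeg A X : ℤ)) :=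
  ⟨fun hK _ hC _ _ hXC _ => gao_yang_condition_of_kiraly_condition M π A hK hC hXC,
    kiraly_condition_of_gao_yang_condition M π A⟩

/-- Equivalence of Cs. Király's condition and the Gao–Yang condition for a digraph
`D = (V, A)`, a multiset `S` of `V` and a matroid `M` on `S`. -/
theorem kiraly_condition_iff_gao_yang_condition
    (V : Type) [Fintype V] [DecidableEq V]
    (A : Multiset (V × V)) (hA : ∀ a ∈ A, a.1 ≠ a.2)
    (S : Type) [Fintype S] [DecidableEq S] (π : S → V) (M : RankFn S) :
    (∀ X : Finset V,
        (M.r (Finset.univ.filter fun s => π s ∈ PD A X) : ℤ) -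
            M.r (Finset.univ.filter fun s => π s ∈ X)
          ≤ (inDeg A X : ℤ)) ↔
    (∀ C : Finset V, IsSCCD A C →
      ∀ X : Finset V, X ⊆ PD A C → (X ∩ C).Nonempty → inDeg A (X \ C) = 0 →
        (M.r (Finset.univ.filter fun s => π s ∈ PD A C) : ℤ) -
            M.r (Finset.univ.filter fun s => π s ∈ X)
          ≤ (inDeg A X : ℤ)) :=
  kiraly_condition_iff_gao_yang_condition_general V A S π M

end ArborPaper
end
end
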